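/- arXiv:2509.05782 — 3 statements merged into one kernel-verified Lean document; each statement's English description precedes it below -/
import Mathlib

section
/- Let Ω ⊆ ℝ^d be a bounded measurable set of positive measure and suppose {exp(2πi λ·x) : λ ∈ Λ} is an orthogonal basis of L²(Ω). Then for every t ∈ ℝ^d, ∑_{λ∈Λ} |1̂_Ω(t − λ)|² = vol(Ω)², where 1̂_Ω(ξ) = ∫_Ω exp(−2πi ξ·x) dx. In other words, the function |1̂_Ω|² tiles ℝ^d with translation set Λ at level vol(Ω)². -/
/-!
Writing `e_λ(x) = exp(2πi⟪λ, x⟫)`, the Fourier coefficient `1̂_Ω(t - λ)` is the `L²(Ω)` inner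
product `⟪e_t, e_λ⟫`, and every `e_λ` has squared norm `vol(Ω)`. Parseval's identity for the
orthogonal basis `(e_λ)_{λ ∈ Λ}`, applied to `e_t`, therefore reads
`∑_λ |1̂_Ω(t - λ)|² = vol(Ω) · ‖e_t‖² = vol(Ω)²`.
-/

open MeasureTheory

section Parseval

variable {ι 𝕜 H : Type*} [RCLike 𝕜] [NormedAddCommGroup H] [InnerProductSpace 𝕜 H]

theorem HilbertBasis.hasSum_norm_inner_sq (b : HilbertBasis ι 𝕜 H) (x : H) :
    HasSum (fun i => ‖inner 𝕜 x (b i)‖ ^ 2) (‖x‖ ^ 2) := by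
  simpa only [inner_mul_symm_re_eq_norm, norm_mul, norm_inner_symm (b _) x, ← sq,
    inner_self_eq_norm_sq] using RCLike.hasSum_re 𝕜 (b.hasSum_inner_mul_inner x x)

theorem hasSum_norm_inner_sq_div_of_orthogonal [CompleteSpace H] {v : ι → H}
    (hv : Pairwise fun i j => inner 𝕜 (v i) (v j) = 0) (hv0 : ∀ i, v i ≠ 0)
    (hsp : (Submodule.span 𝕜 (Set.range v))ᗮ = ⊥) (x : H) :
    HasSum (fun i => ‖inner 𝕜 x (v i)‖ ^ 2 / ‖v i‖ ^ 2) (‖x‖ ^ 2) := by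
  set w : ι → H := fun i => (‖v i‖⁻¹ : 𝕜) • v i
  have hw : Orthonormal 𝕜 w := by
    refine ⟨fun i => ?_, fun i j hij => ?_⟩
    · simp [w, norm_smul, hv0 i]
    · simp [w, inner_smul_left, inner_smul_right, hv hij]
  have hspan : Submodule.span 𝕜 (Set.range w) = Submodule.span 𝕜 (Set.range v) := by
    apply le_antisymm <;> rw [Submodule.span_le, Set.range_subset_iff] <;> intro i
    · exact Submodule.smul_mem _ _ (Submodule.subset_span ⟨i, rfl⟩)
    · have : v i = (‖v i‖ : 𝕜) • w i := by
        simp [w, smul_smul, hv0 i]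
      rw [this]
      exact Submodule.smul_mem _ _ (Submodule.subset_span ⟨i, rfl⟩)
  rw [← hspan] at hsp
  have h := (HilbertBasis.mkOfOrthogonalEqBot hw hsp).hasSum_norm_inner_sq x
  rw [HilbertBasis.coe_mkOfOrthogonalEqBot] at h
  convert h using 2 with i
  simp [w, inner_smul_right, mul_pow, div_eq_inv_mul]

theorem hasSum_norm_inner_sq_of_orthogonal_of_norm_sq_eq [CompleteSpace H] {v : ι → H} {c : ℝ}
    (hv : Pairwise fun i j => inner 𝕜 (v i) (v j) = 0) (hnorm : ∀ i, ‖v i‖ ^ 2 = c)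
    (hsp : (Submodule.span 𝕜 (Set.range v))ᗮ = ⊥) (x : H) :
    HasSum (fun i => ‖inner 𝕜 x (v i)‖ ^ 2) (c * ‖x‖ ^ 2) := by
  rcases eq_or_ne c 0 with rfl | hc
  · have hv_zero : ∀ i, v i = 0 := fun i => by simpa using hnorm i
    simp [hv_zero, hasSum_zero]
  · have hv0 : ∀ i, v i ≠ 0 := fun i h => hc (by simpa [h] using (hnorm i).symm)
    simpa only [hnorm, mul_div_cancel₀ _ hc] using
      (hasSum_norm_inner_sq_div_of_orthogonal hv hv0 hsp x).mul_left c

end Parseval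

section Exponentials

variable {E : Type*} [NormedAddCommGroup E] [InnerProductSpace ℝ E]

noncomputable def expInner (l x : E) : ℂ :=
  Complex.exp (2 * Real.pi * Complex.I * (inner ℝ l x : ℝ))

theorem continuous_expInner (l : E) : Continuous (expInner l) := by
  unfold expInner; fun_prop

theorem norm_expInner (l x : E) : ‖expInner l x‖ = 1 := by
  simp [expInner, Complex.norm_exp]

theorem expInner_mul_conj (a b x : E) :
    expInner b x * starRingEnd ℂ (expInner a x) =
      Complex.exp (-(2 * Real.pi * Complex.I * (inner ℝ (a - b) x : ℝ))) := by
  simp only [expInner, ← Complex.exp_conj, ← Complex.exp_add, map_mul, Complex.conj_I,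
    Complex.conj_ofReal, map_ofNat, inner_sub_left, Complex.ofReal_sub]
  ring_nf

variable [MeasurableSpace E] [OpensMeasurableSpace E] {μ : Measure E} [IsFiniteMeasure μ]

theorem memLp_expInner (l : E) : MemLp (expInner l) 2 μ :=
  MemLp.of_bound (continuous_expInner l).aestronglyMeasurable 1
    (ae_of_all _ fun x => (norm_expInner l x).le)

theorem inner_toLp_expInner_left (a : E) (g : Lp ℂ 2 μ) :
    inner ℂ ((memLp_expInner a).toLp _) g = ∫ x, g x * starRingEnd ℂ (expInner a x) ∂μ := by
  rw [L2.inner_def]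
  refine integral_congr_ae ((memLp_expInner a).coeFn_toLp.mono fun x hx => ?_)
  simp [hx]

theorem inner_toLp_expInner (a b : E) :
    inner ℂ ((memLp_expInner (μ := μ) a).toLp _) ((memLp_expInner b).toLp _) =
      ∫ x, expInner b x * starRingEnd ℂ (expInner a x) ∂μ := by
  rw [inner_toLp_expInner_left]
  exact integral_congr_ae ((memLp_expInner b).coeFn_toLp.mono fun x hx => by simp only [hx])

theorem norm_toLp_expInner_sq (a : E) :
    ‖(memLp_expInner (μ := μ) a).toLp _‖ ^ 2 = μ.real Set.univ := by
  rw [← inner_self_eq_norm_sq (𝕜 := ℂ), inner_toLp_expInner]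
  simp [expInner_mul_conj]

theorem orthogonal_span_toLp_expInner_eq_bot {Λ : Set E}
    (hcomplete : ∀ f : E → ℂ, MemLp f 2 μ →
      (∀ l ∈ Λ, ∫ x, f x * starRingEnd ℂ (expInner l x) ∂μ = 0) → f =ᵐ[μ] 0) :
    (Submodule.span ℂ (Set.range fun l : Λ => (memLp_expInner (μ := μ) (l : E)).toLp _))ᗮ = ⊥ := by
  refine (Submodule.eq_bot_iff _).2 fun g hg => Lp.eq_zero_iff_ae_eq_zero.2 ?_
  refine hcomplete g (Lp.memLp g) fun l hl => ?_
  rw [← inner_toLp_expInner_left]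
  exact hg _ (Submodule.subset_span ⟨⟨l, hl⟩, rfl⟩)

end Exponentials

theorem stmt2_general (d : ℕ) (Ω : Set (EuclideanSpace ℝ (Fin d)))
    (hbdd : Bornology.IsBounded Ω)
    (Λ : Set (EuclideanSpace ℝ (Fin d)))
    (horth : ∀ l ∈ Λ, ∀ m ∈ Λ, l ≠ m →
      ∫ x in Ω, Complex.exp (2 * Real.pi * Complex.I * (inner ℝ l x : ℝ)) *
        (starRingEnd ℂ) (Complex.exp (2 * Real.pi * Complex.I * (inner ℝ m x : ℝ))) = 0)
    (hcomplete : ∀ f : EuclideanSpace ℝ (Fin d) → ℂ, MemLp f 2 (volume.restrict Ω) →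
      (∀ l ∈ Λ, ∫ x in Ω, f x *
        (starRingEnd ℂ) (Complex.exp (2 * Real.pi * Complex.I * (inner ℝ l x : ℝ))) = 0) →
      f =ᵐ[volume.restrict Ω] 0) :
    ∀ t : EuclideanSpace ℝ (Fin d),
      ∑' l : Λ, ‖∫ x in Ω, Complex.exp
          (-(2 * Real.pi * Complex.I * (inner ℝ (t - (l : EuclideanSpace ℝ (Fin d))) x : ℝ)))‖ ^ 2
        = ((volume Ω).toReal) ^ 2 := by
  intro t
  have : IsFiniteMeasure (volume.restrict Ω) :=
    isFiniteMeasure_restrict.2 hbdd.measure_lt_top.ne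
  set e : Λ → Lp ℂ 2 (volume.restrict Ω) := fun l =>
    (memLp_expInner (l : EuclideanSpace ℝ (Fin d))).toLp _
  have he_orth : Pairwise fun l m => inner ℂ (e l) (e m) = 0 := fun l m hlm => by
    simp only [e, inner_toLp_expInner]
    exact horth m m.2 l l.2 (Subtype.coe_ne_coe.2 hlm.symm)
  have hparseval := hasSum_norm_inner_sq_of_orthogonal_of_norm_sq_eq he_orth
    (fun l => norm_toLp_expInner_sq (l : EuclideanSpace ℝ (Fin d)))
    (orthogonal_span_toLp_expInner_eq_bot hcomplete) ((memLp_expInner t).toLp _)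
  rw [norm_toLp_expInner_sq, measureReal_restrict_apply_univ, ← sq] at hparseval
  simpa only [e, inner_toLp_expInner, expInner_mul_conj, measureReal_def] using hparseval.tsum_eq

/-- If `E(Λ)` is an orthogonal basis of `L²(Ω)` then `|1̂_Ω|²` tiles `ℝ^d` with
translation set `Λ` at level `vol(Ω)²`. -/
theorem stmt2 (d : ℕ) (Ω : Set (EuclideanSpace ℝ (Fin d)))
    (hmeas : MeasurableSet Ω) (hbdd : Bornology.IsBounded Ω)
    (hpos : 0 < volume Ω) (Λ : Set (EuclideanSpace ℝ (Fin d)))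
    (horth : ∀ l ∈ Λ, ∀ m ∈ Λ, l ≠ m →
      ∫ x in Ω, Complex.exp (2 * Real.pi * Complex.I * (inner ℝ l x : ℝ)) *
        (starRingEnd ℂ) (Complex.exp (2 * Real.pi * Complex.I * (inner ℝ m x : ℝ))) = 0)
    (hcomplete : ∀ f : EuclideanSpace ℝ (Fin d) → ℂ, MemLp f 2 (volume.restrict Ω) →
      (∀ l ∈ Λ, ∫ x in Ω, f x *
        (starRingEnd ℂ) (Complex.exp (2 * Real.pi * Complex.I * (inner ℝ l x : ℝ))) = 0) →
      f =ᵐ[volume.restrict Ω] 0) :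
    ∀ t : EuclideanSpace ℝ (Fin d),
      ∑' l : Λ, ‖∫ x in Ω, Complex.exp
          (-(2 * Real.pi * Complex.I * (inner ℝ (t - (l : EuclideanSpace ℝ (Fin d))) x : ℝ)))‖ ^ 2
        = ((volume Ω).toReal) ^ 2 :=
  stmt2_general d Ω hbdd Λ horth hcomplete
end

section
/- The triangle T with vertices (0,0), (1,0), (0,1) is not spectral: there is no set Λ ⊆ ℝ² such that {exp(2πi λ·x) : λ ∈ Λ} is an orthogonal basis of L²(T). -/
/-!
Write `F(ξ) = ∫_T e^{2πi ξ·x} dx`. An explicit computation shows that `F(a, b) = 0` only for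
`(a, b) ∈ ℤ²` with `a ≠ 0`, `b ≠ 0`, `a ≠ b`. Hence if `Λ` is a spectrum and `λ₀ ∈ Λ`, then
`Λ ⊆ λ₀ + ℤ²` and distinct points of `Λ` have distinct first and distinct second coordinates.
Parseval's identity for `e_t`, `t = λ₀ + (1/2, 1/2)`, reads `∑_{λ ∈ Λ} |F(t - λ)|² = |T|² = 1/4`.
The term `λ = λ₀` is `|F(1/2, 1/2)|² = 4/π⁴ + 1/π²`. Every other term is `|F(1/2 - m, 1/2 - n)|²`
with integers `m ≠ n`, which is at most `(2/π⁴)((2m-1)⁻⁴ + (2n-1)⁻⁴)`; as `m` and `n` run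
injectively over `ℤ`, these add up to at most `(2/π⁴) · 2 ∑_{k ≠ 0} k⁻⁴ = 4/45`.
But `4/π⁴ + 1/π² + 4/45 < 1/4`.
-/

open MeasureTheory Complex Real Set
open scoped ComplexConjugate InnerProductSpace

noncomputable section

namespace TriangleNotSpectral

theorem setIntegral_prod_eq_integral_fiber {α β E : Type*} [MeasurableSpace α] [MeasurableSpace β]
    [NormedAddCommGroup E] [NormedSpace ℝ E] {μ : Measure α} {ν : Measure β} [SFinite μ]
    [SFinite ν] {s : Set (α × β)} (hs : MeasurableSet s) {f : α × β → E}
    (hf : IntegrableOn f s (μ.prod ν)) :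
    ∫ z in s, f z ∂μ.prod ν = ∫ x, ∫ y in Prod.mk x ⁻¹' s, f (x, y) ∂ν ∂μ := by
  rw [← integral_indicator hs, integral_prod _ ((integrable_indicator_iff hs).2 hf)]
  congr with x
  rw [← integral_indicator (measurable_prodMk_left hs)]
  rfl

def triangle : Set (ℝ × ℝ) := {q | 0 < q.1 ∧ 0 < q.2 ∧ q.1 + q.2 < 1}

theorem measurableSet_triangle : MeasurableSet triangle :=
  (isOpen_lt continuous_const continuous_fst).inter
    ((isOpen_lt continuous_const continuous_snd).inter
      (isOpen_lt (continuous_fst.add continuous_snd) continuous_const)) |>.measurableSet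

theorem triangle_subset_Icc : triangle ⊆ Icc (0, 0) (1, 1) := by
  rintro ⟨x, y⟩ ⟨hx, hy, hxy⟩
  exact ⟨⟨hx.le, hy.le⟩, ⟨by dsimp at *; linarith, by dsimp at *; linarith⟩⟩

instance : IsFiniteMeasure (volume.restrict triangle) :=
  isFiniteMeasure_restrict.2 <|
    ((measure_mono triangle_subset_Icc).trans_lt isCompact_Icc.measure_lt_top).ne

theorem integrableOn_triangle_of_continuous {f : ℝ × ℝ → ℂ} (hf : Continuous f) :
    IntegrableOn f triangle :=
  (hf.continuousOn.integrableOn_compact isCompact_Icc).mono_set triangle_subset_Icc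

theorem integral_triangle {f : ℝ × ℝ → ℂ} (hf : IntegrableOn f triangle) :
    ∫ p in triangle, f p = ∫ x in (0 : ℝ)..1, ∫ y in (0 : ℝ)..(1 - x), f (x, y) := by
  rw [Measure.volume_eq_prod] at hf ⊢
  rw [setIntegral_prod_eq_integral_fiber measurableSet_triangle hf,
    intervalIntegral.integral_of_le zero_le_one, ← setIntegral_eq_integral_of_forall_compl_eq_zero]
  · refine setIntegral_congr_fun measurableSet_Ioc fun x hx => ?_
    have hfiber : Prod.mk x ⁻¹' triangle = Ioo 0 (1 - x) := by
      ext y; simp only [triangle, mem_preimage, mem_ofPred_eq, mem_Ioo]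
      constructor
      · rintro ⟨-, hy, hxy⟩; exact ⟨hy, by linarith⟩
      · rintro ⟨hy, hxy⟩; exact ⟨hx.1, hy, by linarith⟩
    rw [hfiber, intervalIntegral.integral_of_le (by linarith [hx.2]), integral_Ioc_eq_integral_Ioo]
  · intro x hx
    have hfiber : Prod.mk x ⁻¹' triangle = ∅ := by
      ext y; simp only [triangle, mem_preimage, mem_ofPred_eq, mem_empty_iff_false, iff_false]
      rintro ⟨h0, hy, hxy⟩
      exact hx ⟨h0, by linarith⟩
    rw [hfiber, Measure.restrict_empty, integral_zero_measure]

def twoPiI (a : ℝ) : ℂ := 2 * π * I * a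

theorem twoPiI_eq (a : ℝ) : twoPiI a = ((2 * π * a : ℝ) : ℂ) * I := by
  push_cast [twoPiI]; ring

theorem twoPiI_ne_zero {a : ℝ} (ha : a ≠ 0) : twoPiI a ≠ 0 := by
  rw [twoPiI_eq]; exact mul_ne_zero (by exact_mod_cast by positivity) I_ne_zero

theorem twoPiI_zero : twoPiI 0 = 0 := by simp [twoPiI]

theorem twoPiI_sub (a b : ℝ) : twoPiI (a - b) = twoPiI a - twoPiI b := by
  push_cast [twoPiI]; ring

theorem norm_exp_twoPiI (a : ℝ) : ‖exp (twoPiI a)‖ = 1 := by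
  rw [twoPiI_eq, norm_exp_ofReal_mul_I]

theorem eq_zero_of_norm_twoPiI_add_ofReal {a s : ℝ} (h : ‖twoPiI a + s‖ = |s|) : a = 0 := by
  have : ‖twoPiI a + s‖ ^ 2 = s ^ 2 + (2 * π * a) ^ 2 := by
    rw [twoPiI_eq, Complex.sq_norm, add_comm, normSq_add_mul_I]
  rw [h, sq_abs] at this
  have : 2 * π * a = 0 := by nlinarith
  simpa [pi_ne_zero] using this

theorem exp_twoPiI_intCast (m : ℤ) : exp (twoPiI m) = 1 := by
  rw [← exp_int_mul_two_pi_mul_I m]; congr 1; push_cast [twoPiI]; ring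

theorem exp_twoPiI_half_sub_intCast (m : ℤ) : exp (twoPiI (1 / 2 - m)) = -1 := by
  rw [twoPiI_sub, Complex.exp_sub, exp_twoPiI_intCast, div_one, twoPiI]
  push_cast
  rw [show 2 * π * I * (1 / 2) = π * I by ring, exp_pi_mul_I]

def planeWave (ξ p : ℝ × ℝ) : ℂ := exp (2 * π * I * (ξ.1 * p.1 + ξ.2 * p.2))

theorem continuous_planeWave (ξ : ℝ × ℝ) : Continuous (planeWave ξ) := by
  unfold planeWave; fun_prop

theorem planeWave_eq (ξ p : ℝ × ℝ) :
    planeWave ξ p = exp (twoPiI ξ.1 * p.1 + twoPiI ξ.2 * p.2) := by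
  rw [planeWave, twoPiI, twoPiI]; ring_nf

theorem norm_planeWave (ξ p : ℝ × ℝ) : ‖planeWave ξ p‖ = 1 := by
  simp [planeWave, Complex.norm_exp]

theorem planeWave_mul_conj (l m p : ℝ × ℝ) :
    planeWave l p * conj (planeWave m p) = planeWave (l - m) p := by
  simp only [planeWave]
  rw [← exp_conj, ← Complex.exp_add]
  congr 1
  simp only [map_mul, map_add, conj_ofReal, conj_I, map_ofNat, Prod.fst_sub, Prod.snd_sub]
  push_cast; ring

-- `triangleFourier ξ` is `\hat{1_T}(-ξ)`; the sign convention does not affect the zero set.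
def triangleFourier (ξ : ℝ × ℝ) : ℂ := ∫ p in triangle, planeWave ξ p

theorem triangleFourier_eq_iteratedIntegral (ξ : ℝ × ℝ) :
    triangleFourier ξ = ∫ x in (0 : ℝ)..1, ∫ y in (0 : ℝ)..(1 - x), planeWave ξ (x, y) :=
  integral_triangle (integrableOn_triangle_of_continuous (continuous_planeWave ξ))

theorem triangleFourier_swap (ξ : ℝ × ℝ) : triangleFourier ξ.swap = triangleFourier ξ := by
  have hswap : MeasurePreserving (Prod.swap : ℝ × ℝ → ℝ × ℝ) := by
    rw [Measure.volume_eq_prod]; exact Measure.measurePreserving_swap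
  have htriangle : Prod.swap ⁻¹' triangle = triangle := by
    ext ⟨x, y⟩
    simp only [triangle, mem_preimage, Prod.swap_prod_mk, mem_ofPred_eq]
    constructor <;> rintro ⟨h1, h2, h3⟩ <;> exact ⟨h2, h1, by linarith⟩
  calc triangleFourier ξ.swap = ∫ p in Prod.swap ⁻¹' triangle, planeWave ξ p.swap := by
        simp only [htriangle, triangleFourier, planeWave, Prod.fst_swap, Prod.snd_swap, add_comm]
    _ = triangleFourier ξ :=
        hswap.setIntegral_preimage_emb MeasurableEquiv.prodComm.measurableEmbedding _ _

theorem integral_exp_mul_unitInterval {u : ℂ} (hu : u ≠ 0) :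
    ∫ x in (0 : ℝ)..1, exp (u * x) = (exp u - 1) / u := by
  simp [integral_exp_mul_complex hu]

theorem triangleFourier_eq {a b : ℝ} (hb : b ≠ 0) :
    triangleFourier (a, b) =
      (exp (twoPiI b) * ∫ x in (0 : ℝ)..1, exp (twoPiI (a - b) * x)) / twoPiI b
        - (∫ x in (0 : ℝ)..1, exp (twoPiI a * x)) / twoPiI b := by
  have hinner (x : ℝ) : ∫ y in (0 : ℝ)..(1 - x), planeWave (a, b) (x, y) =
      exp (twoPiI b) * exp (twoPiI (a - b) * x) / twoPiI b - exp (twoPiI a * x) / twoPiI b := by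
    have hsplit : exp (twoPiI b) * exp (twoPiI (a - b) * x) =
        exp (twoPiI a * x) * exp (twoPiI b * (1 - x : ℝ)) := by
      rw [← Complex.exp_add, ← Complex.exp_add, twoPiI_sub]; push_cast; ring_nf
    simp_rw [planeWave_eq, Complex.exp_add, intervalIntegral.integral_const_mul,
      integral_exp_mul_complex (twoPiI_ne_zero hb), hsplit]
    simp only [ofReal_zero, mul_zero, Complex.exp_zero]
    ring
  rw [triangleFourier_eq_iteratedIntegral]
  simp_rw [hinner]
  rw [intervalIntegral.integral_sub ((by fun_prop : Continuous _).intervalIntegrable _ _)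
    ((by fun_prop : Continuous _).intervalIntegrable _ _), intervalIntegral.integral_div,
    intervalIntegral.integral_div, intervalIntegral.integral_const_mul]

theorem triangleFourier_zero : triangleFourier 0 = 1 / 2 := by
  rw [triangleFourier_eq_iteratedIntegral]
  simp only [planeWave, Prod.fst_zero, Prod.snd_zero, ofReal_zero, zero_mul, add_zero, mul_zero,
    Complex.exp_zero, intervalIntegral.integral_const, sub_zero, real_smul, ofReal_sub, ofReal_one,
    mul_one]
  rw [intervalIntegral.integral_sub intervalIntegrable_const
    (continuous_ofReal.intervalIntegrable _ _), intervalIntegral.integral_ofReal]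
  norm_num

theorem triangleFourier_zero_left {b : ℝ} (hb : b ≠ 0) :
    triangleFourier (0, b) = (exp (twoPiI b) - 1 - twoPiI b) / twoPiI b ^ 2 := by
  have hK := twoPiI_ne_zero hb
  rw [triangleFourier_eq hb, twoPiI_sub, twoPiI_zero, zero_sub,
    integral_exp_mul_unitInterval (neg_ne_zero.2 hK), Complex.exp_neg]
  simp only [zero_mul, Complex.exp_zero, intervalIntegral.integral_const, sub_zero, one_smul]
  field_simp
  ring

theorem triangleFourier_diag {b : ℝ} (hb : b ≠ 0) :
    triangleFourier (b, b) = ((twoPiI b - 1) * exp (twoPiI b) + 1) / twoPiI b ^ 2 := by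
  have hK := twoPiI_ne_zero hb
  rw [triangleFourier_eq hb, sub_self, twoPiI_zero, integral_exp_mul_unitInterval hK]
  simp only [zero_mul, Complex.exp_zero, intervalIntegral.integral_const, sub_zero, one_smul]
  field_simp
  ring

theorem triangleFourier_of_ne {a b : ℝ} (ha : a ≠ 0) (hb : b ≠ 0) (hab : a ≠ b) :
    triangleFourier (a, b) =
      (a * exp (twoPiI b) - b * exp (twoPiI a) - (a - b)) / (4 * π ^ 2 * a * b * (a - b)) := by
  have hsplit : exp (twoPiI b) * exp (twoPiI (a - b)) = exp (twoPiI a) := by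
    rw [← Complex.exp_add, twoPiI_sub, add_sub_cancel]
  rw [triangleFourier_eq hb, integral_exp_mul_unitInterval (twoPiI_ne_zero (sub_ne_zero.2 hab)),
    integral_exp_mul_unitInterval (twoPiI_ne_zero ha), mul_div_assoc', mul_sub, hsplit, mul_one]
  have ha' : (a : ℂ) ≠ 0 := by exact_mod_cast ha
  have hb' : (b : ℂ) ≠ 0 := by exact_mod_cast hb
  have hab' : (a : ℂ) - b ≠ 0 := by exact_mod_cast sub_ne_zero.2 hab
  simp only [twoPiI]
  push_cast
  field_simp
  linear_combination
    4 * (b * exp (2 * π * I * a) - a * exp (2 * π * I * b) + (a - b)) * I_sq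

theorem exp_twoPiI (a : ℝ) :
    exp (twoPiI a) = (Real.cos (2 * π * a) : ℂ) + (Real.sin (2 * π * a) : ℂ) * I := by
  rw [twoPiI_eq, exp_mul_I, ← ofReal_cos, ← ofReal_sin]

theorem triangleFourier_zero_left_ne_zero (b : ℝ) : triangleFourier (0, b) ≠ 0 := by
  rcases eq_or_ne b 0 with rfl | hb
  · rw [Prod.mk_zero_zero, triangleFourier_zero]; norm_num
  intro h
  rw [triangleFourier_zero_left hb, div_eq_zero_iff,
    or_iff_left (pow_ne_zero 2 (twoPiI_ne_zero hb))] at h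
  have hexp : twoPiI b + (1 : ℝ) = exp (twoPiI b) := by push_cast; linear_combination -h
  exact hb (eq_zero_of_norm_twoPiI_add_ofReal (by rw [hexp, norm_exp_twoPiI, abs_one]))

theorem triangleFourier_diag_ne_zero (b : ℝ) : triangleFourier (b, b) ≠ 0 := by
  rcases eq_or_ne b 0 with rfl | hb
  · exact triangleFourier_zero_left_ne_zero 0
  intro h
  rw [triangleFourier_diag hb, div_eq_zero_iff,
    or_iff_left (pow_ne_zero 2 (twoPiI_ne_zero hb))] at h
  have hexp : (twoPiI b + (-1 : ℝ)) * exp (twoPiI b) = -1 := by push_cast; linear_combination h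
  refine hb (eq_zero_of_norm_twoPiI_add_ofReal (s := -1) ?_)
  simpa [norm_exp_twoPiI] using congrArg norm hexp

theorem exists_intCast_eq_of_triangleFourier_eq_zero {a b : ℝ} (ha : a ≠ 0) (hb : b ≠ 0)
    (hab : a ≠ b) (h : triangleFourier (a, b) = 0) : ∃ m : ℤ, a = m := by
  -- `F(a, b) = 0` says `a e^{2πib} = b e^{2πia} + (a - b)`; comparing moduli gives `cos 2πa = 1`.
  have hden : (4 * π ^ 2 * a * b * (a - b) : ℂ) ≠ 0 := by
    have := sub_ne_zero.2 hab
    exact_mod_cast (by positivity : (4 * π ^ 2 * a * b * (a - b) : ℝ) ≠ 0)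
  rw [triangleFourier_of_ne ha hb hab, div_eq_zero_iff, or_iff_left hden] at h
  have key : (a : ℂ) * exp (twoPiI b) =
      ((b * Real.cos (2 * π * a) + (a - b) : ℝ) : ℂ) + (b * Real.sin (2 * π * a) : ℝ) * I := by
    rw [exp_twoPiI a] at h; push_cast at h ⊢; linear_combination h
  have hnorm := congrArg (‖·‖ ^ 2) key
  simp only [norm_mul, norm_exp_twoPiI, Complex.norm_real, Real.norm_eq_abs, mul_one, sq_abs,
    Complex.sq_norm, normSq_add_mul_I] at hnorm
  have hcos : 2 * b * (a - b) * (Real.cos (2 * π * a) - 1) = 0 := by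
    linear_combination -hnorm - b ^ 2 * Real.sin_sq_add_cos_sq (2 * π * a)
  have hcos' : Real.cos (2 * π * a) = 1 := by
    have := sub_ne_zero.2 hab
    simpa [sub_eq_zero, ha, hb, this] using hcos
  obtain ⟨m, hm⟩ := (Real.cos_eq_one_iff _).1 hcos'
  exact ⟨m, by nlinarith [pi_pos]⟩

theorem exists_int_of_triangleFourier_eq_zero {ξ : ℝ × ℝ} (h : triangleFourier ξ = 0) :
    ∃ m n : ℤ, ξ = ((m : ℝ), (n : ℝ)) ∧ m ≠ 0 ∧ n ≠ 0 ∧ m ≠ n := by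
  obtain ⟨a, b⟩ := ξ
  have h' : triangleFourier (b, a) = 0 := by rwa [← triangleFourier_swap] at h
  have ha : a ≠ 0 := by rintro rfl; exact triangleFourier_zero_left_ne_zero b h
  have hb : b ≠ 0 := by rintro rfl; exact triangleFourier_zero_left_ne_zero a h'
  have hab : a ≠ b := by rintro rfl; exact triangleFourier_diag_ne_zero a h
  obtain ⟨m, rfl⟩ := exists_intCast_eq_of_triangleFourier_eq_zero ha hb hab h
  obtain ⟨n, rfl⟩ := exists_intCast_eq_of_triangleFourier_eq_zero hb ha hab.symm h'
  exact ⟨m, n, rfl, by exact_mod_cast ha, by exact_mod_cast hb, by exact_mod_cast hab⟩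

theorem sq_norm_triangleFourier_half_half :
    ‖triangleFourier (1 / 2, 1 / 2)‖ ^ 2 = 4 / π ^ 4 + 1 / π ^ 2 := by
  have hK : twoPiI (1 / 2) = π * I := by push_cast [twoPiI]; ring
  have hπ : (π : ℂ) ≠ 0 := ofReal_ne_zero.2 pi_ne_zero
  have hval : triangleFourier (1 / 2, 1 / 2) = ((-2 / π ^ 2 : ℝ) : ℂ) + ((1 / π : ℝ) : ℂ) * I := by
    rw [triangleFourier_diag (by norm_num), hK, exp_pi_mul_I]
    push_cast
    field_simp
    linear_combination (2 - π * I) * I_sq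
  rw [hval, Complex.sq_norm, normSq_add_mul_I]
  field_simp
  ring

theorem half_sub_intCast_ne_zero (k : ℤ) : (1 / 2 - k : ℝ) ≠ 0 := by
  rw [sub_ne_zero]; intro h
  have : (2 * k : ℝ) = 1 := by linarith
  have : 2 * k = 1 := by exact_mod_cast this
  omega

theorem triangleFourier_half_sub_intCast {m n : ℤ} (hmn : m ≠ n) :
    triangleFourier (1 / 2 - m, 1 / 2 - n) =
      ((-1 / (2 * π ^ 2 * (1 / 2 - m) * (1 / 2 - n)) : ℝ) : ℂ) := by
  have hab : (1 / 2 - m : ℝ) ≠ 1 / 2 - n := by simpa using hmn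
  rw [triangleFourier_of_ne (half_sub_intCast_ne_zero m) (half_sub_intCast_ne_zero n) hab,
    exp_twoPiI_half_sub_intCast, exp_twoPiI_half_sub_intCast]
  have hπ : (π : ℂ) ≠ 0 := ofReal_ne_zero.2 pi_ne_zero
  have key (a b : ℂ) (ha : a ≠ 0) (hb : b ≠ 0) (hab : a - b ≠ 0) :
      (a * -1 - b * -1 - (a - b)) / (4 * π ^ 2 * a * b * (a - b)) = -1 / (2 * π ^ 2 * a * b) := by
    field_simp; ring
  rw [key _ _ (ofReal_ne_zero.2 (half_sub_intCast_ne_zero m))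
    (ofReal_ne_zero.2 (half_sub_intCast_ne_zero n)) (by exact_mod_cast sub_ne_zero.2 hab)]
  push_cast
  ring

theorem sq_norm_triangleFourier_half_sub_intCast_le {m n : ℤ} (hmn : m ≠ n) :
    ‖triangleFourier (1 / 2 - m, 1 / 2 - n)‖ ^ 2 ≤
      2 / π ^ 4 * (1 / ((2 * m - 1 : ℤ) : ℝ) ^ 4 + 1 / ((2 * n - 1 : ℤ) : ℝ) ^ 4) := by
  rw [triangleFourier_half_sub_intCast hmn, norm_real, Real.norm_eq_abs, sq_abs]
  have hm : ((2 * m - 1 : ℤ) : ℝ) = -2 * (1 / 2 - m) := by push_cast; ring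
  have hn : ((2 * n - 1 : ℤ) : ℝ) = -2 * (1 / 2 - n) := by push_cast; ring
  rw [hm, hn]
  have ha := half_sub_intCast_ne_zero m
  have hb := half_sub_intCast_ne_zero n
  generalize (1 / 2 - m : ℝ) = a at ha ⊢
  generalize (1 / 2 - n : ℝ) = b at hb ⊢
  have hπ := pi_ne_zero
  have hsq : 0 ≤ (1 / a ^ 2 - 1 / b ^ 2) ^ 2 / (8 * π ^ 4) := by positivity
  calc (-1 / (2 * π ^ 2 * a * b)) ^ 2
      = 2 / π ^ 4 * (1 / (-2 * a) ^ 4 + 1 / (-2 * b) ^ 4)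
          - (1 / a ^ 2 - 1 / b ^ 2) ^ 2 / (8 * π ^ 4) := by
        field_simp; ring
    _ ≤ _ := sub_le_self _ hsq

theorem hasSum_int_one_div_pow_four : HasSum (fun n : ℤ => 1 / (n : ℝ) ^ 4) (π ^ 4 / 45) := by
  have h := HasSum.of_nat_of_neg (f := fun n : ℤ => 1 / (n : ℝ) ^ 4)
    (by simpa using hasSum_zeta_four)
    (by simpa [Even.neg_pow (by decide : Even 4)] using hasSum_zeta_four)
  rw [show π ^ 4 / 45 = π ^ 4 / 90 + π ^ 4 / 90 - 1 / ((0 : ℤ) : ℝ) ^ 4 by simp; ring]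
  exact h

theorem summable_and_tsum_one_div_pow_four_comp_le {ι : Type*} {φ : ι → ℤ}
    (hφ : Function.Injective φ) :
    Summable (fun i => 1 / (φ i : ℝ) ^ 4) ∧ ∑' i, 1 / (φ i : ℝ) ^ 4 ≤ π ^ 4 / 45 := by
  have hsum := hasSum_int_one_div_pow_four.summable
  refine ⟨hsum.comp_injective hφ, ?_⟩
  rw [← hasSum_int_one_div_pow_four.tsum_eq]
  exact tsum_comp_le_tsum_of_inj hsum (fun n => by positivity) hφ

theorem hasSum_sq_norm_inner_of_orthogonal {𝕜 E ι : Type*} [RCLike 𝕜] [NormedAddCommGroup E]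
    [InnerProductSpace 𝕜 E] [CompleteSpace E] {v : ι → E} {c : ℝ} (hc : 0 < c)
    (hv : ∀ i, ‖v i‖ = c) (horth : Pairwise fun i j => ⟪v i, v j⟫_𝕜 = 0)
    (hcomplete : ∀ x, (∀ i, ⟪v i, x⟫_𝕜 = 0) → x = 0) (x : E) :
    HasSum (fun i => ‖⟪v i, x⟫_𝕜‖ ^ 2) (c ^ 2 * ‖x‖ ^ 2) := by
  set u : ι → E := fun i => ((c⁻¹ : ℝ) : 𝕜) • v i
  have hu : Orthonormal 𝕜 u := by
    refine ⟨fun i => ?_, fun i j hij => ?_⟩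
    · simp [u, norm_smul, hv, abs_of_pos hc, hc.ne']
    · simp [u, inner_smul_left, inner_smul_right, horth hij]
  have hsp : (Submodule.span 𝕜 (range u))ᗮ = ⊥ := by
    refine (Submodule.eq_bot_iff _).2 fun y hy => hcomplete y fun i => ?_
    have := (Submodule.mem_orthogonal _ y).1 hy (u i) (Submodule.subset_span ⟨i, rfl⟩)
    simpa [u, inner_smul_left, hc.ne'] using this
  have := lp.hasSum_norm (p := 2) (by norm_num) ((HilbertBasis.mkOfOrthogonalEqBot hu hsp).repr x)
  simp only [HilbertBasis.repr_apply_apply, HilbertBasis.coe_mkOfOrthogonalEqBot, u,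
    inner_smul_left, map_inv₀, RCLike.conj_ofReal, norm_mul, norm_inv, norm_algebraMap',
    norm_eq_abs, ENNReal.toReal_ofNat, rpow_ofNat, mul_pow, inv_pow, sq_abs, norm_map] at this
  have hc2 : c ^ 2 ≠ 0 := by positivity
  rw [show (fun i => ‖⟪v i, x⟫_𝕜‖ ^ 2) = fun i => c ^ 2 * ((c ^ 2)⁻¹ * ‖⟪v i, x⟫_𝕜‖ ^ 2) by
    simp [hc2]]
  exact this.mul_left _

theorem memLp_planeWave (ξ : ℝ × ℝ) : MemLp (planeWave ξ) 2 (volume.restrict triangle) :=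
  MemLp.of_bound (continuous_planeWave ξ).aestronglyMeasurable 1
    (Filter.Eventually.of_forall fun p => (norm_planeWave ξ p).le)

def planeWaveL2 (ξ : ℝ × ℝ) : Lp ℂ 2 (volume.restrict triangle) := (memLp_planeWave ξ).toLp _

theorem inner_planeWaveL2_left (ξ : ℝ × ℝ) (g : Lp ℂ 2 (volume.restrict triangle)) :
    ⟪planeWaveL2 ξ, g⟫_ℂ = ∫ p in triangle, g p * conj (planeWave ξ p) := by
  rw [L2.inner_def]
  refine integral_congr_ae ?_
  filter_upwards [(memLp_planeWave ξ).coeFn_toLp] with p hp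
  rw [RCLike.inner_apply, planeWaveL2, hp]

theorem inner_planeWaveL2 (s t : ℝ × ℝ) :
    ⟪planeWaveL2 s, planeWaveL2 t⟫_ℂ = triangleFourier (t - s) := by
  rw [inner_planeWaveL2_left, triangleFourier]
  refine integral_congr_ae ?_
  filter_upwards [(memLp_planeWave t).coeFn_toLp] with p hp
  rw [planeWaveL2, hp, planeWave_mul_conj]

theorem sq_norm_planeWaveL2 (ξ : ℝ × ℝ) : ‖planeWaveL2 ξ‖ ^ 2 = 1 / 2 := by
  rw [@norm_sq_eq_re_inner ℂ, inner_planeWaveL2, sub_self, triangleFourier_zero]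
  norm_num

theorem hasSum_sq_norm_triangleFourier {Λ : Set (ℝ × ℝ)}
    (horth : Λ.Pairwise fun l m => triangleFourier (l - m) = 0)
    (hcomplete : ∀ g : Lp ℂ 2 (volume.restrict triangle),
      (∀ l ∈ Λ, ⟪planeWaveL2 l, g⟫_ℂ = 0) → g = 0)
    (t : ℝ × ℝ) : HasSum (fun l : Λ => ‖triangleFourier (t - l)‖ ^ 2) (1 / 4) := by
  have hc : 0 < ‖planeWaveL2 0‖ := by
    nlinarith [sq_norm_planeWaveL2 0, norm_nonneg (planeWaveL2 0)]
  have := hasSum_sq_norm_inner_of_orthogonal (v := fun l : Λ => planeWaveL2 l) hc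
    (fun l => by rw [← sq_eq_sq₀ (norm_nonneg _) hc.le, sq_norm_planeWaveL2, sq_norm_planeWaveL2])
    (fun l m hlm => by
      dsimp only; rw [inner_planeWaveL2]; exact horth m.2 l.2 (Subtype.coe_injective.ne hlm.symm))
    (fun g hg => hcomplete g fun l hl => hg ⟨l, hl⟩) (planeWaveL2 t)
  simp only [inner_planeWaveL2, sq_norm_planeWaveL2] at this
  convert this using 1
  norm_num

theorem exists_injective_int_coords {Λ : Set (ℝ × ℝ)}
    (horth : Λ.Pairwise fun l m => triangleFourier (l - m) = 0) {l₀ : ℝ × ℝ} (h₀ : l₀ ∈ Λ) :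
    ∃ M N : Λ → ℤ, Function.Injective M ∧ Function.Injective N ∧
      ∀ l : Λ, (l : ℝ × ℝ) = l₀ + ((M l : ℝ), (N l : ℝ)) ∧ ((l : ℝ × ℝ) ≠ l₀ → M l ≠ N l) := by
  have hcoords (l : Λ) : ∃ m n : ℤ,
      (l : ℝ × ℝ) = l₀ + ((m : ℝ), (n : ℝ)) ∧ ((l : ℝ × ℝ) ≠ l₀ → m ≠ n) := by
    by_cases hl : (l : ℝ × ℝ) = l₀
    · exact ⟨0, 0, by simp [hl], fun h => (h hl).elim⟩
    obtain ⟨m, n, hmn, -, -, hne⟩ := exists_int_of_triangleFourier_eq_zero (horth l.2 h₀ hl)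
    exact ⟨m, n, by rw [← hmn]; abel, fun _ => hne⟩
  choose M N hMN using hcoords
  have hdiff {l l' : Λ} (hne : l ≠ l') : M l ≠ M l' ∧ N l ≠ N l' := by
    obtain ⟨m, n, hmn, hm, hn, -⟩ :=
      exists_int_of_triangleFourier_eq_zero (horth l.2 l'.2 (Subtype.coe_injective.ne hne))
    rw [(hMN l).1, (hMN l').1, add_sub_add_left_eq_sub, Prod.mk_sub_mk, Prod.mk.injEq] at hmn
    constructor <;> intro h <;> rw [h, sub_self] at hmn
    · exact hm (by exact_mod_cast hmn.1.symm)
    · exact hn (by exact_mod_cast hmn.2.symm)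
  exact ⟨M, N, fun l l' h => by_contra fun hne => (hdiff hne).1 h,
    fun l l' h => by_contra fun hne => (hdiff hne).2 h, hMN⟩

theorem four_div_pi_pow_four_add_one_div_pi_sq_lt : 4 / π ^ 4 + 1 / π ^ 2 + 4 / 45 < 1 / 4 := by
  have hx : 1 / π ^ 2 < 1 / 9 := by
    gcongr; nlinarith [pi_gt_three]
  have hx0 : 0 < 1 / π ^ 2 := by positivity
  have : 4 / π ^ 4 = 4 * (1 / π ^ 2) ^ 2 := by ring
  nlinarith

theorem tsum_sq_norm_triangleFourier_lt {Λ : Set (ℝ × ℝ)}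
    (horth : Λ.Pairwise fun l m => triangleFourier (l - m) = 0) {l₀ : ℝ × ℝ} (h₀ : l₀ ∈ Λ)
    (hs : Summable fun l : Λ => ‖triangleFourier (l₀ + (1 / 2, 1 / 2) - (l : ℝ × ℝ))‖ ^ 2) :
    ∑' l : Λ, ‖triangleFourier (l₀ + (1 / 2, 1 / 2) - (l : ℝ × ℝ))‖ ^ 2 < 1 / 4 := by
  classical
  obtain ⟨M, N, hM, hN, hMN⟩ := exists_injective_int_coords horth h₀
  set g := fun l : Λ => ‖triangleFourier (l₀ + (1 / 2, 1 / 2) - (l : ℝ × ℝ))‖ ^ 2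
  set i₀ : Λ := ⟨l₀, h₀⟩
  have hodd : Function.Injective fun k : ℤ => 2 * k - 1 := fun a b h => by dsimp only at h; omega
  obtain ⟨hsM, htM⟩ : Summable (fun l => 1 / ((2 * M l - 1 : ℤ) : ℝ) ^ 4) ∧
      ∑' l, 1 / ((2 * M l - 1 : ℤ) : ℝ) ^ 4 ≤ π ^ 4 / 45 :=
    summable_and_tsum_one_div_pow_four_comp_le (hodd.comp hM)
  obtain ⟨hsN, htN⟩ : Summable (fun l => 1 / ((2 * N l - 1 : ℤ) : ℝ) ^ 4) ∧
      ∑' l, 1 / ((2 * N l - 1 : ℤ) : ℝ) ^ 4 ≤ π ^ 4 / 45 :=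
    summable_and_tsum_one_div_pow_four_comp_le (hodd.comp hN)
  set f := fun l : Λ => 2 / π ^ 4 *
    (1 / ((2 * M l - 1 : ℤ) : ℝ) ^ 4 + 1 / ((2 * N l - 1 : ℤ) : ℝ) ^ 4)
  have hf : Summable f := (hsM.add hsN).mul_left _
  have hle (l : Λ) : (if l = i₀ then 0 else g l) ≤ f l := by
    split_ifs with hl
    · positivity
    obtain ⟨hl_eq, hl_ne⟩ := hMN l
    have : l₀ + (1 / 2, 1 / 2) - (l : ℝ × ℝ) = (1 / 2 - (M l : ℝ), 1 / 2 - (N l : ℝ)) := by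
      rw [hl_eq]; ext <;> simp
    simp only [g, this]
    exact sq_norm_triangleFourier_half_sub_intCast_le (hl_ne fun h => hl (Subtype.ext h))
  have hg₀ : g i₀ = 4 / π ^ 4 + 1 / π ^ 2 := by
    simp only [g, i₀, add_sub_cancel_left]
    exact sq_norm_triangleFourier_half_half
  calc ∑' l, g l = g i₀ + ∑' l, if l = i₀ then 0 else g l := hs.tsum_eq_add_tsum_ite i₀
    _ ≤ g i₀ + ∑' l, f l := add_le_add_right (Summable.tsum_le_tsum hle
          (.of_nonneg_of_le (fun l => by split_ifs <;> positivity) hle hf) hf) _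
    _ = g i₀ + 2 / π ^ 4 * (∑' l, 1 / ((2 * M l - 1 : ℤ) : ℝ) ^ 4
          + ∑' l, 1 / ((2 * N l - 1 : ℤ) : ℝ) ^ 4) := by
        rw [tsum_mul_left, hsM.tsum_add hsN]
    _ ≤ 4 / π ^ 4 + 1 / π ^ 2 + 2 / π ^ 4 * (π ^ 4 / 45 + π ^ 4 / 45) := by
        rw [hg₀]; gcongr
    _ = 4 / π ^ 4 + 1 / π ^ 2 + 4 / 45 := by field_simp; ring
    _ < 1 / 4 := four_div_pi_pow_four_add_one_div_pi_sq_lt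

end TriangleNotSpectral

open TriangleNotSpectral

/-- The triangle with vertices `(0,0), (1,0), (0,1)` is not spectral: no set `Λ ⊆ ℝ²`
gives an orthogonal basis of exponentials for `L²(T)`. -/
theorem stmt9 :
    ¬ ∃ Λ : Set (ℝ × ℝ),
      (∀ l ∈ Λ, ∀ m ∈ Λ, l ≠ m →
        ∫ p in {q : ℝ × ℝ | 0 < q.1 ∧ 0 < q.2 ∧ q.1 + q.2 < 1},
          Complex.exp (2 * Real.pi * Complex.I * (l.1 * p.1 + l.2 * p.2)) *
            (starRingEnd ℂ) (Complex.exp (2 * Real.pi * Complex.I * (m.1 * p.1 + m.2 * p.2)))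
          = 0) ∧
      (∀ f : ℝ × ℝ → ℂ,
        MemLp f 2 (volume.restrict {q : ℝ × ℝ | 0 < q.1 ∧ 0 < q.2 ∧ q.1 + q.2 < 1}) →
        (∀ l ∈ Λ, ∫ p in {q : ℝ × ℝ | 0 < q.1 ∧ 0 < q.2 ∧ q.1 + q.2 < 1},
          f p * (starRingEnd ℂ) (Complex.exp (2 * Real.pi * Complex.I * (l.1 * p.1 + l.2 * p.2)))
          = 0) →
        f =ᵐ[volume.restrict {q : ℝ × ℝ | 0 < q.1 ∧ 0 < q.2 ∧ q.1 + q.2 < 1}] 0) := by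
  rintro ⟨Λ, horth, hcomplete⟩
  have hF : Λ.Pairwise fun l m => triangleFourier (l - m) = 0 := fun l hl m hm hlm => by
    simp_rw [triangleFourier, ← planeWave_mul_conj]
    exact horth l hl m hm hlm
  have hParseval := hasSum_sq_norm_triangleFourier hF fun g hg =>
    Lp.eq_zero_iff_ae_eq_zero.2 <| hcomplete g (Lp.memLp g) fun l hl => by
      rw [← hg l hl, inner_planeWaveL2_left]; rfl
  obtain ⟨l₀, h₀⟩ : Λ.Nonempty := by
    rw [nonempty_iff_ne_empty]
    rintro rfl
    simpa using (hParseval 0).unique hasSum_empty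
  have := tsum_sq_norm_triangleFourier_lt hF h₀ (hParseval _).summable
  rw [(hParseval _).tsum_eq] at this
  exact lt_irrefl _ this
end
end

section
/- Suppose every pairwise distance between distinct points of a set Λ ⊆ ℝ^d lies in a set D ⊆ (0,∞), where D ⊆ ⋃_n {r_n} with r_n = A + Bn + o(1), B > 0. Suppose moreover Λ has minimal separation C > 0 and positive counting density. Assume the theorem that every subset of ℝ^d (d ≥ 2) of positive upper Lebesgue density realizes all sufficiently large distances. Then we have a contradiction; i.e. no such Λ exists. -/
/-!
Thicken `Λ` by a radius `ε` small compared with both the separation `C` and the gap `B`. The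
`ε`-balls around the points of `Λ` are disjoint, so the counting density of `Λ` becomes a
positive Lebesgue density of the thickening, which must therefore realize every large distance.
But a distance realized in the thickening is within `2ε` of a distance realized in `Λ`, i.e. of
some `r n`, whereas the `r n` are asymptotically spaced `B` apart and so miss windows of width
`B / 2` around arbitrarily large reals.
-/

open MeasureTheory Metric Filter Topology Module

section Packing

variable {E : Type*} [NormedAddCommGroup E] [NormedSpace ℝ E] [MeasurableSpace E] [BorelSpace E]
  [FiniteDimensional ℝ E] (μ : Measure E) [μ.IsAddHaarMeasure]

theorem addHaar_real_ball_of_pos {ε : ℝ} (hε : 0 < ε) :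
    μ.real (ball (0 : E) ε) = ε ^ finrank ℝ E * μ.real (ball 0 1) := by
  rw [measureReal_def, Measure.addHaar_ball_of_pos μ _ hε, ENNReal.toReal_mul,
    ENNReal.toReal_ofReal (by positivity), measureReal_def]

theorem ncard_inter_closedBall_mul_measureReal_ball_le {Λ : Set E} {ε : ℝ}
    (hsep : Λ.Pairwise fun x y => 2 * ε ≤ dist x y) (x : E) (R : ℝ) :
    (Λ ∩ closedBall x R).ncard * μ.real (ball 0 ε)
      ≤ μ.real (thickening ε Λ ∩ closedBall x (R + ε)) := by
  by_cases hfin : (Λ ∩ closedBall x R).Finite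
  swap
  · rw [Set.Infinite.ncard hfin, Nat.cast_zero, zero_mul]
    exact measureReal_nonneg
  set F := hfin.toFinset
  have hdisj : (F : Set E).PairwiseDisjoint fun l => ball l ε := by
    intro l hl p hp hlp
    exact ball_disjoint_ball <| by
      linarith [hsep (hfin.mem_toFinset.1 hl).1 (hfin.mem_toFinset.1 hp).1 hlp]
  have hsub : (⋃ l ∈ F, ball l ε) ⊆ thickening ε Λ ∩ closedBall x (R + ε) := by
    simp only [Set.iUnion_subset_iff]
    intro l hl z hz
    obtain ⟨hlΛ, hlR⟩ := hfin.mem_toFinset.1 hl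
    refine ⟨mem_thickening_iff.2 ⟨l, hlΛ, hz⟩, ?_⟩
    rw [mem_closedBall] at hlR ⊢
    linarith [dist_triangle z l x, mem_ball.1 hz]
  calc (Λ ∩ closedBall x R).ncard * μ.real (ball 0 ε)
      = ∑ l ∈ F, μ.real (ball l ε) := by
        simp [Set.ncard_eq_toFinset_card _ hfin, F, Measure.addHaar_real_ball_center]
    _ = μ.real (⋃ l ∈ F, ball l ε) :=
        (measureReal_biUnion_finset hdisj fun _ _ => measurableSet_ball).symm
    _ ≤ μ.real (thickening ε Λ ∩ closedBall x (R + ε)) :=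
        measureReal_mono hsub (measure_inter_lt_top_of_right_ne_top measure_closedBall_lt_top.ne).ne

theorem exists_le_measureReal_thickening_inter_closedBall {Λ : Set E} {ε c R₀ : ℝ}
    (hε : 0 < ε) (hc : 0 ≤ c) (hsep : Λ.Pairwise fun x y => 2 * ε ≤ dist x y)
    (hdens : ∀ R ≥ R₀, c * R ^ finrank ℝ E ≤ (Λ ∩ closedBall 0 R).ncard) (S₀ : ℝ) :
    ∃ S ≥ S₀, 1 ≤ S ∧ ∃ x : E,
      c * ε ^ finrank ℝ E / 2 ^ finrank ℝ E * μ.real (closedBall x S)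
        ≤ μ.real (thickening ε Λ ∩ closedBall x S) := by
  set d := finrank ℝ E with hd
  set R := max R₀ (max S₀ (max ε 1))
  have hR₀ : R₀ ≤ R := le_max_left _ _
  have hS₀ : S₀ ≤ R := le_max_of_le_right (le_max_left _ _)
  have hεR : ε ≤ R := le_max_of_le_right (le_max_of_le_right (le_max_left _ _))
  have h1R : 1 ≤ R := le_max_of_le_right (le_max_of_le_right (le_max_right _ _))
  refine ⟨R + ε, by linarith, by linarith, 0, ?_⟩
  have hpow : (R + ε) ^ d ≤ 2 ^ d * R ^ d := by
    rw [← mul_pow]; exact pow_le_pow_left₀ (by linarith) (by linarith) d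
  calc c * ε ^ d / 2 ^ d * μ.real (closedBall 0 (R + ε))
      = c * ε ^ d / 2 ^ d * (R + ε) ^ d * μ.real (ball 0 1) := by
        rw [Measure.addHaar_real_closedBall μ _ (by linarith)]; ring
    _ ≤ c * ε ^ d / 2 ^ d * (2 ^ d * R ^ d) * μ.real (ball 0 1) := by gcongr
    _ = c * R ^ d * μ.real (ball 0 ε) := by
        rw [addHaar_real_ball_of_pos μ hε, ← hd]; field_simp
    _ ≤ (Λ ∩ closedBall 0 R).ncard * μ.real (ball 0 ε) :=
        mul_le_mul_of_nonneg_right (hdens R hR₀) measureReal_nonneg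
    _ ≤ μ.real (thickening ε Λ ∩ closedBall 0 (R + ε)) :=
        ncard_inter_closedBall_mul_measureReal_ball_le μ hsep 0 R

end Packing

theorem exists_abs_sub_dist_lt_of_mem_thickening {X : Type*} [PseudoMetricSpace X] {Λ : Set X}
    {ε : ℝ} {x y : X} (hx : x ∈ thickening ε Λ) (hy : y ∈ thickening ε Λ) :
    ∃ l ∈ Λ, ∃ p ∈ Λ, |dist x y - dist l p| < 2 * ε := by
  obtain ⟨l, hl, hxl⟩ := mem_thickening_iff.1 hx
  obtain ⟨p, hp, hyp⟩ := mem_thickening_iff.1 hy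
  refine ⟨l, hl, p, hp, ?_⟩
  have := dist_dist_dist_le x y l p
  rw [Real.dist_eq] at this
  linarith

theorem half_le_abs_add_half_sub (m n : ℕ) : 1 / 2 ≤ |(m : ℝ) + 1 / 2 - n| := by
  rcases le_or_gt n m with h | h
  · have : (n : ℝ) ≤ m := by exact_mod_cast h
    rw [abs_of_nonneg (by linarith)]; linarith
  · have : (m : ℝ) + 1 ≤ n := by exact_mod_cast h
    rw [abs_of_nonpos (by linarith)]; linarith

theorem frequently_forall_le_abs_sub {r : ℕ → ℝ} {A B : ℝ} (hB : 0 < B)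
    (hasymp : Tendsto (fun n : ℕ => r n - (A + B * n)) atTop (𝓝 0)) :
    ∃ᶠ t in atTop, ∀ n, B / 4 ≤ |t - r n| := by
  set t : ℕ → ℝ := fun m => A + B * (m + 1 / 2)
  have ht : Tendsto t atTop atTop :=
    tendsto_atTop_add_const_left _ _ <| (tendsto_atTop_add_const_right _ _
      tendsto_natCast_atTop_atTop).const_mul_atTop hB
  obtain ⟨N, hN⟩ := eventually_atTop.1 <|
    hasymp.eventually (Metric.ball_mem_nhds 0 (by positivity : 0 < B / 4))
  have hinitial : ∀ᶠ m in atTop, ∀ n ∈ Finset.range N, r n + B / 4 ≤ t m :=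
    (Finset.eventually_all _).2 fun n _ => ht.eventually_ge_atTop _
  refine ht.frequently (hinitial.mono fun m hm n => ?_).frequently
  rcases lt_or_ge n N with hn | hn
  · linarith [hm n (Finset.mem_range.2 hn), le_abs_self (t m - r n)]
  · have hr : |r n - (A + B * n)| < B / 4 := by simpa [Real.dist_eq] using hN n hn
    have hmid : B / 2 ≤ |t m - (A + B * n)| := by
      have : t m - (A + B * n) = B * (m + 1 / 2 - n) := by ring
      rw [this, abs_mul, abs_of_pos hB]
      nlinarith [half_le_abs_add_half_sub m n]
    have := abs_sub_abs_le_abs_sub (t m - (A + B * n)) (r n - (A + B * n))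
    rw [sub_sub_sub_cancel_right] at this
    linarith

theorem stmt17_general (d : ℕ) (Λ : Set (EuclideanSpace ℝ (Fin d)))
    (D : Set ℝ)
    (r : ℕ → ℝ) (A B : ℝ) (hB : 0 < B)
    (hasymp : Filter.Tendsto (fun n : ℕ => r n - (A + B * n)) Filter.atTop (nhds 0))
    (hDr : D ⊆ Set.range r)
    (hdist : ∀ l ∈ Λ, ∀ m ∈ Λ, l ≠ m → dist l m ∈ D)
    (C : ℝ) (hC : 0 < C)
    (hsep : ∀ l ∈ Λ, ∀ m ∈ Λ, l ≠ m → C ≤ dist l m)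
    (c : ℝ) (hc : 0 < c) (R₀ : ℝ)
    (hdens : ∀ R ≥ R₀, c * R ^ d ≤ ((Λ ∩ closedBall (0 : EuclideanSpace ℝ (Fin d)) R).ncard : ℝ))
    (hdistance_thm : ∀ E : Set (EuclideanSpace ℝ (Fin d)),
      (∃ c' > (0 : ℝ), ∀ S₀ : ℝ, ∃ S ≥ S₀, 1 ≤ S ∧ ∃ x : EuclideanSpace ℝ (Fin d),
        c' * (volume (closedBall x S)).toReal ≤ (volume (E ∩ closedBall x S)).toReal) →
      ∃ t₀ : ℝ, ∀ t ≥ t₀, ∃ x ∈ E, ∃ y ∈ E, dist x y = t) :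
    False := by
  set ε := min (C / 2) (B / 10)
  have hε : 0 < ε := lt_min (by positivity) (by positivity)
  have hεB : ε ≤ B / 10 := min_le_right _ _
  have hsep' : Λ.Pairwise fun l m => 2 * ε ≤ dist l m := fun l hl m hm hlm =>
    le_trans (by linarith [min_le_left (C / 2) (B / 10)]) (hsep l hl m hm hlm)
  obtain ⟨t₀, ht₀⟩ := hdistance_thm (thickening ε Λ) ⟨_, by positivity,
    exists_le_measureReal_thickening_inter_closedBall volume hε hc.le hsep'
      (by simpa only [finrank_euclideanSpace_fin] using hdens)⟩
  obtain ⟨t, hgap, ht⟩ :=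
    ((frequently_forall_le_abs_sub hB hasymp).and_eventually
      (eventually_ge_atTop (max t₀ B))).exists
  obtain ⟨x, hx, y, hy, rfl⟩ := ht₀ _ ((le_max_left _ _).trans ht)
  obtain ⟨l, hl, p, hp, hlp⟩ := exists_abs_sub_dist_lt_of_mem_thickening hx hy
  rcases eq_or_ne l p with rfl | hne
  · rw [dist_self, sub_zero, abs_of_nonneg dist_nonneg] at hlp
    linarith [le_max_right t₀ B]
  · obtain ⟨n, hn⟩ := hDr (hdist l hl p hp hne)
    linarith [hgap n, hn ▸ hlp]

/-- No uniformly separated set of positive counting density in `ℝ^d` (`d ≥ 2`) can have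
all its pairwise distances within a set `D` contained in `{r n}` with `r n = A + Bn + o(1)`,
assuming the theorem that sets of positive upper Lebesgue density realize all
sufficiently large distances. -/
theorem stmt17 (d : ℕ) (hd : 2 ≤ d) (Λ : Set (EuclideanSpace ℝ (Fin d)))
    (D : Set ℝ) (hD : D ⊆ Set.Ioi (0 : ℝ))
    (r : ℕ → ℝ) (A B : ℝ) (hB : 0 < B)
    (hasymp : Filter.Tendsto (fun n : ℕ => r n - (A + B * n)) Filter.atTop (nhds 0))
    (hDr : D ⊆ Set.range r)
    (hdist : ∀ l ∈ Λ, ∀ m ∈ Λ, l ≠ m → dist l m ∈ D)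
    (C : ℝ) (hC : 0 < C)
    (hsep : ∀ l ∈ Λ, ∀ m ∈ Λ, l ≠ m → C ≤ dist l m)
    (c : ℝ) (hc : 0 < c) (R₀ : ℝ)
    (hdens : ∀ R ≥ R₀, c * R ^ d ≤ ((Λ ∩ closedBall (0 : EuclideanSpace ℝ (Fin d)) R).ncard : ℝ))
    (hdistance_thm : ∀ E : Set (EuclideanSpace ℝ (Fin d)),
      (∃ c' > (0 : ℝ), ∀ S₀ : ℝ, ∃ S ≥ S₀, 1 ≤ S ∧ ∃ x : EuclideanSpace ℝ (Fin d),
        c' * (volume (closedBall x S)).toReal ≤ (volume (E ∩ closedBall x S)).toReal) →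
      ∃ t₀ : ℝ, ∀ t ≥ t₀, ∃ x ∈ E, ∃ y ∈ E, dist x y = t) :
    False :=
  stmt17_general d Λ D r A B hB hasymp hDr hdist C hC hsep c hc R₀ hdens hdistance_thm
end
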